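/- (Corollaries 3.1 and 3.2: k-FWER bound for step-down procedures with estimated quantile critical values) Let (Ω, 𝓕, P) be a probability space, 1 ≤ k ≤ s, let I ⊆ {1,…,s} with |I| ≥ k be the set of true hypotheses, let T_1,…,T_s : Ω → ℝ be measurable, and let α ∈ (0,1). Let ω ↦ μ̂(ω) be any map from Ω to probability measures on ℝ^s, and for each K ⊆ {1,…,s} with |K| ≥ k set ĉ_K(ω) := q_{1−α}( law under μ̂(ω) of k-max of the coordinates indexed by K ); assume each map ω ↦ ĉ_K(ω) is measurable. Then the step-down procedure (Algorithm 2.1) with statistics T_i(ω) and critical values ĉ_K(ω) satisfies P{at least k indices in I are rejected} ≤ P{k-max(T_i : i ∈ I) > ĉ_I}. -/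

import Mathlib

open MeasureTheory Filter Topology

/-- The `k`-th largest of the values `y i`, `i ∈ K` (counted with multiplicity). -/
noncomputable def kmax {s : ℕ} (k : ℕ) (K : Finset (Fin s)) (y : Fin s → ℝ) : ℝ :=
  ((K.val.map y).sort (· ≤ ·)).getD (K.card - k) 0

/-- The `β`-quantile of a (probability) measure on `ℝ`:
`q_β(L) = inf {x | L((-∞, x]) ≥ β}`. -/
noncomputable def quantile (μ : Measure ℝ) (β : ℝ) : ℝ :=
  sInf {x : ℝ | ENNReal.ofReal β ≤ μ (Set.Iic x)}

/-- The critical value `d̂_{A_j}` of Algorithm 2.1 at a stage where `R` is the set of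
previously rejected indices: the maximum of `ĉ_{Rᶜ ∪ I'}` over `I' ⊆ R` with `|I'| = k - 1`. -/
noncomputable def dcrit {s : ℕ} (k : ℕ) (c : Finset (Fin s) → ℝ) (R : Finset (Fin s)) : ℝ :=
  sSup {x : ℝ | ∃ I' ⊆ R, I'.card = k - 1 ∧ x = c (Rᶜ ∪ I')}

/-- One step of the step-down procedure (Algorithm 2.1): given the set `R` of indices
rejected so far, returns the set of indices rejected after performing the next step. -/
noncomputable def stepDownNext {s : ℕ} (k : ℕ) (c : Finset (Fin s) → ℝ) (T : Fin s → ℝ)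
    (R : Finset (Fin s)) : Finset (Fin s) :=
  if R = ∅ then Finset.univ.filter (fun i => c Finset.univ < T i)
  else if R.card < k then R
  else R ∪ Rᶜ.filter (fun i => dcrit k c R < T i)

/-- The rejection set of the step-down procedure (Algorithm 2.1) with statistics `T` and
critical values `c`. -/
noncomputable def stepDownRejections {s : ℕ} (k : ℕ) (c : Finset (Fin s) → ℝ)
    (T : Fin s → ℝ) : Finset (Fin s) :=
  (stepDownNext k c T)^[s] ∅


/-! Since a `k`-max over a larger index set dominates pointwise and quantiles are monotone in the
stochastic order, the critical values `ĉ_K` are monotone in `K`. For monotone critical values,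
as long as fewer than `k` indices of `I` have been rejected, the threshold `d̂` of the next step
is at least `ĉ_I`: take `I' ⊆ R` of size `k - 1` containing `R ∩ I`, so that `I ⊆ Rᶜ ∪ I'`.
Hence every rejected index of `I` has `T_i > ĉ_I`, and `k` such rejections force
`k-max(T_i : i ∈ I) > ĉ_I`. -/

open Finset

theorem List.SortedLE.lt_getElem_iff_length_sub_le_countP {α : Type*} [LinearOrder α]
    {l : List α} (hl : l.SortedLE) {m : ℕ} (hm : m < l.length) (x : α) :
    x < l[m] ↔ l.length - m ≤ l.countP (x < ·) := by
  have hsplit : ∀ n, l.countP (x < ·) = (l.take n).countP (x < ·) + (l.drop n).countP (x < ·) :=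
    fun n => by rw [← List.countP_append, List.take_append_drop]
  constructor
  · intro hx
    have hdrop : (l.drop m).countP (x < ·) = l.length - m := by
      rw [List.countP_eq_length.2, List.length_drop]
      intro z hz
      obtain ⟨j, hj, rfl⟩ := List.mem_iff_getElem.1 hz
      rw [List.getElem_drop, decide_eq_true_eq]
      exact hx.trans_le (hl.getElem_le_getElem_of_le (Nat.le_add_right m j))
    have := hsplit m
    omega
  · intro hcount
    by_contra! hx
    have htake : (l.take (m + 1)).countP (x < ·) = 0 := by
      rw [List.countP_eq_zero]
      intro z hz
      obtain ⟨j, hj, rfl⟩ := List.mem_iff_getElem.1 hz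
      rw [List.getElem_take, decide_eq_true_eq, not_lt]
      rw [List.length_take] at hj
      exact (hl.getElem_le_getElem_of_le (by omega)).trans hx
    have hdrop := List.countP_le_length (l := l.drop (m + 1)) (p := (x < ·))
    rw [List.length_drop] at hdrop
    have := hsplit (m + 1)
    omega

section KMax

variable {s k : ℕ} {I K : Finset (Fin s)}

theorem lt_kmax_iff (hk : 1 ≤ k) (hK : k ≤ #K) {x : ℝ} {y : Fin s → ℝ} :
    x < kmax k K y ↔ k ≤ #{i ∈ K | x < y i} := by
  unfold kmax
  set l := (K.val.map y).sort (· ≤ ·)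
  have hlen : l.length = #K := by simp [l]
  have hcount : l.countP (x < ·) = #{i ∈ K | x < y i} := by
    rw [← Multiset.coe_countP, Multiset.sort_eq, Multiset.countP_map, card_def, filter_val]
  have hsorted : l.SortedLE := List.sortedLE_iff_pairwise.2 (Multiset.pairwise_sort _ _)
  rw [List.getD_eq_getElem _ _ (by omega),
    hsorted.lt_getElem_iff_length_sub_le_countP, hlen, hcount, Nat.sub_sub_self hK]

theorem kmax_mono (hk : 1 ≤ k) (hI : k ≤ #I) (hIK : I ⊆ K) (y : Fin s → ℝ) :
    kmax k I y ≤ kmax k K y := by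
  have hK : k ≤ #K := hI.trans (card_le_card hIK)
  refine le_of_forall_lt fun x hx => (lt_kmax_iff hk hK).2 ?_
  exact ((lt_kmax_iff hk hI).1 hx).trans (card_le_card (filter_subset_filter _ hIK))

theorem measurable_kmax (hk : 1 ≤ k) (hK : k ≤ #K) : Measurable (kmax k K) := by
  refine measurable_of_Ioi fun x => ?_
  have hcount : Measurable fun y : Fin s → ℝ => #{i ∈ K | x < y i} := by
    simp_rw [card_filter]
    exact Finset.measurable_sum _ fun i _ =>
      Measurable.ite (measurableSet_lt measurable_const (measurable_pi_apply i))
        measurable_const measurable_const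
  have hpre : kmax k K ⁻¹' Set.Ioi x = (fun y => #{i ∈ K | x < y i}) ⁻¹' Set.Ici k := by
    ext y
    exact lt_kmax_iff hk hK
  rw [hpre]
  exact hcount measurableSet_Ici

end KMax

section Quantile

variable {β : ℝ}

theorem nonempty_setOf_ofReal_le_measure_Iic (μ : Measure ℝ) [IsProbabilityMeasure μ]
    (hβ : β < 1) : {x : ℝ | ENNReal.ofReal β ≤ μ (Set.Iic x)}.Nonempty := by
  have hlt : ENNReal.ofReal β < μ Set.univ := by
    rw [measure_univ, ENNReal.ofReal_lt_one]
    exact hβ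
  exact ((tendsto_measure_Iic_atTop μ).eventually (eventually_ge_nhds hlt)).exists

theorem bddBelow_setOf_ofReal_le_measure_Iic (μ : Measure ℝ) [IsFiniteMeasure μ]
    (hβ : 0 < β) : BddBelow {x : ℝ | ENNReal.ofReal β ≤ μ (Set.Iic x)} := by
  have hbot : Tendsto (fun x => μ (Set.Iic x)) atBot (𝓝 0) := by
    have h := tendsto_measure_iInter_atBot (μ := μ)
      (fun x => measurableSet_Iic.nullMeasurableSet) monotone_Iic ⟨0, measure_ne_top μ _⟩
    rwa [iInter_Iic_eq_empty_iff.2 (by simp [not_bddBelow_univ]), measure_empty] at h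
  obtain ⟨a, ha⟩ := Filter.eventually_atBot.1
    (hbot.eventually (eventually_lt_nhds (ENNReal.ofReal_pos.2 hβ)))
  refine ⟨a, fun x hx => ?_⟩
  by_contra! hxa
  exact (ha x hxa.le).not_ge hx

theorem quantile_mono {μ ν : Measure ℝ} [IsProbabilityMeasure μ] [IsProbabilityMeasure ν]
    (hμν : ∀ x, ν (Set.Iic x) ≤ μ (Set.Iic x)) (hβ0 : 0 < β) (hβ1 : β < 1) :
    quantile μ β ≤ quantile ν β :=
  csInf_le_csInf (bddBelow_setOf_ofReal_le_measure_Iic μ hβ0)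
    (nonempty_setOf_ofReal_le_measure_Iic ν hβ1) fun _ hx => hx.trans (hμν _)

theorem quantile_map_mono {δ : Type*} [MeasurableSpace δ] {μ : Measure δ}
    [IsProbabilityMeasure μ] {f g : δ → ℝ} (hf : Measurable f) (hg : Measurable g)
    (hfg : f ≤ g) (hβ0 : 0 < β) (hβ1 : β < 1) :
    quantile (μ.map f) β ≤ quantile (μ.map g) β := by
  have := Measure.isProbabilityMeasure_map (μ := μ) hf.aemeasurable
  have := Measure.isProbabilityMeasure_map (μ := μ) hg.aemeasurable
  refine quantile_mono (fun x => ?_) hβ0 hβ1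
  rw [Measure.map_apply hf measurableSet_Iic, Measure.map_apply hg measurableSet_Iic]
  exact measure_mono fun y hy => (hfg y).trans hy

end Quantile

section StepDown

variable {s k : ℕ} {c : Finset (Fin s) → ℝ} {T : Fin s → ℝ} {I R : Finset (Fin s)}

theorem le_dcrit {I' : Finset (Fin s)} (hI'R : I' ⊆ R) (hI' : #I' = k - 1) :
    c (Rᶜ ∪ I') ≤ dcrit k c R := by
  have hfin : {x : ℝ | ∃ J ⊆ R, #J = k - 1 ∧ x = c (Rᶜ ∪ J)}.Finite :=
    (Set.finite_range fun J => c (Rᶜ ∪ J)).subset fun _ ⟨J, _, _, hx⟩ => ⟨J, hx.symm⟩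
  exact le_csSup hfin.bddAbove ⟨I', hI'R, hI', rfl⟩

theorem lt_of_mem_stepDownNext_inter (hc : ∀ K, I ⊆ K → c I ≤ c K) (hR : #(R ∩ I) < k)
    (hRT : ∀ i ∈ R ∩ I, c I < T i) {i : Fin s} (hi : i ∈ stepDownNext k c T R ∩ I) :
    c I < T i := by
  obtain ⟨hiR, hiI⟩ := mem_inter.1 hi
  unfold stepDownNext at hiR
  split_ifs at hiR with _ hRk
  · exact (hc univ (subset_univ I)).trans_lt (mem_filter.1 hiR).2
  · exact hRT i (mem_inter.2 ⟨hiR, hiI⟩)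
  rcases mem_union.1 hiR with hiR | hiA
  · exact hRT i (mem_inter.2 ⟨hiR, hiI⟩)
  obtain ⟨I', hRI, hI'R, hI'⟩ :=
    exists_subsuperset_card_eq (n := k - 1) (inter_subset_left : R ∩ I ⊆ R) (by omega) (by omega)
  have hIsub : I ⊆ Rᶜ ∪ I' := fun j hj => by
    by_cases hjR : j ∈ R
    · exact mem_union_right _ (hRI (mem_inter.2 ⟨hjR, hj⟩))
    · exact mem_union_left _ (mem_compl.2 hjR)
  calc c I ≤ c (Rᶜ ∪ I') := hc _ hIsub
    _ ≤ dcrit k c R := le_dcrit hI'R hI'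
    _ < T i := (mem_filter.1 hiA).2

theorem lt_kmax_of_le_card_stepDownRejections_inter (hk : 1 ≤ k) (hI : k ≤ #I)
    (hc : ∀ K, I ⊆ K → c I ≤ c K) (h : k ≤ #(stepDownRejections k c T ∩ I)) :
    c I < kmax k I T := by
  by_contra! hle
  have few : ∀ R : Finset (Fin s), (∀ i ∈ R ∩ I, c I < T i) → #(R ∩ I) < k := by
    intro R hRT
    by_contra! hR
    refine hle.not_gt ((lt_kmax_iff hk hI).2 (hR.trans (card_le_card fun i hi => ?_)))
    exact mem_filter.2 ⟨(mem_inter.1 hi).2, hRT i hi⟩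
  have above : ∀ j, ∀ i ∈ (stepDownNext k c T)^[j] ∅ ∩ I, c I < T i := by
    intro j
    induction j with
    | zero => simp
    | succ j ih =>
      rw [Function.iterate_succ_apply']
      exact fun i => lt_of_mem_stepDownNext_inter hc (few _ ih) ih
  exact (few _ (above s)).not_ge h

end StepDown

theorem stmt9_general {Ω : Type*} [MeasurableSpace Ω] (P : Measure Ω) [IsProbabilityMeasure P]
    {s k : ℕ} (hk1 : 1 ≤ k)
    (I : Finset (Fin s)) (hI : k ≤ I.card)
    (T : Fin s → Ω → ℝ)
    (α : ℝ) (hα : α ∈ Set.Ioo (0:ℝ) 1)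
    (μhat : Ω → Measure (Fin s → ℝ)) (hμ : ∀ ω : Ω, IsProbabilityMeasure (μhat ω)) :
    P {ω | k ≤ ((stepDownRejections k
          (fun K => quantile (Measure.map (fun y => kmax k K y) (μhat ω)) (1 - α))
          (fun i => T i ω)) ∩ I).card}
      ≤ P {ω | quantile (Measure.map (fun y => kmax k I y) (μhat ω)) (1 - α)
          < kmax k I (fun i => T i ω)} := by
  refine measure_mono fun ω hω => ?_
  have := hμ ω
  refine lt_kmax_of_le_card_stepDownRejections_inter hk1 hI (fun K hIK => ?_) hω
  exact quantile_map_mono (measurable_kmax hk1 hI)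
    (measurable_kmax hk1 (hI.trans (card_le_card hIK))) (kmax_mono hk1 hI hIK)
    (by linarith [hα.2]) (by linarith [hα.1])

/-- Corollaries 3.1 and 3.2: for the step-down procedure whose critical values
`ĉ_K(ω)` are the `(1-α)`-quantiles of the law of the `k`-max of the `K`-coordinates under an
estimated distribution `μ̂(ω)` on `ℝ^s`, the probability of rejecting at least `k` indices in
`I` is at most `P{k-max(T_i : i ∈ I) > ĉ_I}`. -/
theorem stmt9 {Ω : Type*} [MeasurableSpace Ω] (P : Measure Ω) [IsProbabilityMeasure P]
    {s k : ℕ} (hs : 1 ≤ s) (hk1 : 1 ≤ k) (hks : k ≤ s)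
    (I : Finset (Fin s)) (hI : k ≤ I.card)
    (T : Fin s → Ω → ℝ) (hT : ∀ i, Measurable (T i))
    (α : ℝ) (hα : α ∈ Set.Ioo (0:ℝ) 1)
    (μhat : Ω → Measure (Fin s → ℝ)) (hμ : ∀ ω : Ω, IsProbabilityMeasure (μhat ω))
    (hmeas : ∀ K : Finset (Fin s), Measurable (fun ω : Ω =>
      quantile (Measure.map (fun y => kmax k K y) (μhat ω)) (1 - α))) :
    P {ω | k ≤ ((stepDownRejections k
          (fun K => quantile (Measure.map (fun y => kmax k K y) (μhat ω)) (1 - α))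
          (fun i => T i ω)) ∩ I).card}
      ≤ P {ω | quantile (Measure.map (fun y => kmax k I y) (μhat ω)) (1 - α)
          < kmax k I (fun i => T i ω)} :=
  stmt9_general P hk1 I hI T α hα μhat hμ
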